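/- (Discrete Hardy–Littlewood–Sobolev inequality, special symmetric case) Let 0 < α < N and set r = 2N/(N+α). There exists a constant C = C(α,N) > 0 such that for all u, v ∈ ℓ^r(ℤ^N), ∑_{x,y ∈ ℤ^N, x ≠ y or all x,y} u(x) R_α(x,y) v(y) ≤ C ‖u‖_r ‖v‖_r, where R_α(x,y) is any kernel satisfying 0 ≤ R_α(x,y) ≤ C'(1 + |x−y|)^{−(N−α)} for all x, y ∈ ℤ^N. -/

import Mathlib

/-- Graph distance on the lattice `ℤ^N` (ℓ¹ distance). -/
def latticeDist (N : ℕ) (x y : Fin N → ℤ) : ℤ := ∑ i, |x i - y i|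

lemma latticeDist_nonneg (N : ℕ) (x y : Fin N → ℤ) : 0 ≤ latticeDist N x y :=
  Finset.sum_nonneg fun i _ => abs_nonneg _

lemma latticeDist_comm (N : ℕ) (x y : Fin N → ℤ) :
    latticeDist N x y = latticeDist N y x := by
  unfold latticeDist
  exact Finset.sum_congr rfl fun i _ => abs_sub_comm _ _

lemma count_ball (N : ℕ) (x : Fin N → ℤ) (D : ℕ) (F : Finset (Fin N → ℤ)) :
    (F.filter (fun y => latticeDist N x y ≤ (D : ℤ))).card ≤ (2*D+1)^N := by
  classical
  have hsub : F.filter (fun y => latticeDist N x y ≤ (D : ℤ)) ⊆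
      Fintype.piFinset (fun i => Finset.Icc (x i - D) (x i + D)) := by
    intro y hy
    rw [Finset.mem_filter] at hy
    rw [Fintype.mem_piFinset]
    intro i
    have h1 : |x i - y i| ≤ latticeDist N x y := by
      unfold latticeDist
      exact Finset.single_le_sum (f := fun j => |x j - y j|) (fun j _ => abs_nonneg _) (Finset.mem_univ i)
    have h2 : |y i - x i| ≤ (D : ℤ) := by
      rw [abs_sub_comm]; exact le_trans h1 hy.2
    rw [abs_le] at h2
    rw [Finset.mem_Icc]
    omega
  calc (F.filter (fun y => latticeDist N x y ≤ (D : ℤ))).card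
      ≤ (Fintype.piFinset (fun i : Fin N => Finset.Icc (x i - D) (x i + D))).card :=
        Finset.card_le_card hsub
    _ = (2*D+1)^N := by
        rw [Fintype.card_piFinset]
        have : ∀ i : Fin N, (Finset.Icc (x i - (D:ℤ)) (x i + D)).card = 2*D+1 := by
          intro i
          rw [Int.card_Icc]
          omega
        simp only [this, Finset.prod_const, Finset.card_univ, Fintype.card_fin]

open scoped ENNReal

noncomputable def eP (t : ℝ) : ℝ≥0∞ := ENNReal.ofReal ((2:ℝ) ^ t)

lemma eP_ne_zero (t : ℝ) : eP t ≠ 0 := by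
  simp only [eP, ne_eq, ENNReal.ofReal_eq_zero, not_le]
  exact Real.rpow_pos_of_pos (by norm_num) t

lemma eP_ne_top (t : ℝ) : eP t ≠ ⊤ := ENNReal.ofReal_ne_top

lemma eP_add (a b : ℝ) : eP (a + b) = eP a * eP b := by
  simp only [eP]
  rw [Real.rpow_add (by norm_num : (0:ℝ) < 2),
    ENNReal.ofReal_mul (Real.rpow_nonneg (by norm_num) a)]

lemma eP_neg (a : ℝ) : eP (-a) = (eP a)⁻¹ := by
  simp only [eP]
  rw [Real.rpow_neg (by norm_num : (0:ℝ) ≤ 2),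
    ENNReal.ofReal_inv_of_pos (Real.rpow_pos_of_pos (by norm_num) a)]

lemma eP_rpow (a : ℝ) {c : ℝ} (hc : 0 ≤ c) : (eP a) ^ c = eP (a * c) := by
  simp only [eP]
  rw [ENNReal.ofReal_rpow_of_nonneg (Real.rpow_nonneg (by norm_num) a) hc,
    ← Real.rpow_mul (by norm_num : (0:ℝ) ≤ 2)]

lemma eP_mono {a b : ℝ} (h : a ≤ b) : eP a ≤ eP b := by
  simp only [eP]
  exact ENNReal.ofReal_le_ofReal
    (Real.rpow_le_rpow_of_exponent_le (by norm_num) h)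

lemma eP_lt_one {t : ℝ} (ht : t < 0) : eP t < 1 := by
  simp only [eP]
  rw [← ENNReal.ofReal_one]
  exact ENNReal.ofReal_lt_ofReal_iff_of_nonneg (Real.rpow_nonneg (by norm_num) t)
    |>.mpr (Real.rpow_lt_one_of_one_lt_of_neg (by norm_num) ht)

lemma finite_level {ι : Type*} {h : ι → ℝ} (hs : Summable h) {ε : ℝ} (hε : 0 < ε) :
    {x | ε ≤ h x}.Finite := by
  have h2 : ∀ᶠ x in Filter.cofinite, h x < ε :=
    hs.tendsto_cofinite_zero.eventually_lt_const hε
  apply Set.Finite.subset (Filter.eventually_cofinite.mp h2)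
  intro x hx
  simp only [Set.mem_setOf_eq] at hx ⊢
  linarith

lemma decomp_tsum_finset {ι : Type*} (f : ι → ℝ) (E : ℤ → Finset ι)
    (hE : ∀ j x, x ∈ E j ↔ (f x ≠ 0 ∧ Int.log 2 (f x) = j))
    (H : ι → ℝ≥0∞) (hH : ∀ x, f x = 0 → H x = 0) :
    ∑' x, H x = ∑' j : ℤ, ∑ x ∈ E j, H x := by
  classical
  have key : ∀ x, H x = ∑' j : ℤ, (if f x ≠ 0 ∧ Int.log 2 (f x) = j then H x else 0) := by
    intro x
    by_cases hx : f x = 0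
    · simp [hx, hH x hx]
    · rw [tsum_eq_single (Int.log 2 (f x))]
      · simp [hx]
      · intro j hj
        rw [if_neg]
        rintro ⟨-, hlog⟩
        exact hj hlog.symm
  calc ∑' x, H x = ∑' x, ∑' j : ℤ, (if f x ≠ 0 ∧ Int.log 2 (f x) = j then H x else 0) :=
        tsum_congr key
    _ = ∑' j : ℤ, ∑' x, (if f x ≠ 0 ∧ Int.log 2 (f x) = j then H x else 0) :=
        ENNReal.tsum_comm
    _ = ∑' j : ℤ, ∑ x ∈ E j, H x := by
        apply tsum_congr
        intro j
        rw [tsum_eq_sum (s := E j)]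
        · apply Finset.sum_congr rfl
          intro x hx
          rw [if_pos ((hE j x).mp hx)]
        · intro x hx
          rw [if_neg]
          intro hc
          exact hx ((hE j x).mpr hc)

lemma geom_tail (s : ℝ) (hs : 0 < s) (j : ℤ) :
    ∑' k : ℤ, (if k ≤ j then eP ((k:ℝ) * s) else 0)
      = eP ((j:ℝ) * s) * (1 - eP (-s))⁻¹ := by
  classical
  have hinj : Function.Injective (fun n : ℕ => j - (n:ℤ)) := by
    intro a b hab
    simpa using hab
  rw [← Function.Injective.tsum_eq hinj ?hsupp]
  case hsupp =>
    intro k hk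
    simp only [Function.mem_support, ne_eq, ite_eq_right_iff, not_forall] at hk
    obtain ⟨hkj, -⟩ := hk
    exact ⟨(j - k).toNat, by simp; omega⟩
  have hterm : ∀ n : ℕ, (if (j - (n:ℤ)) ≤ j then eP ((((j - (n:ℤ)) : ℤ):ℝ) * s) else 0)
      = eP ((j:ℝ)*s) * (eP (-s))^n := by
    intro n
    rw [if_pos (by omega : (j - (n:ℤ)) ≤ j)]
    rw [← ENNReal.rpow_natCast (eP (-s)) n, eP_rpow (-s) (by positivity : (0:ℝ) ≤ ((n:ℕ):ℝ)),
      ← eP_add]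
    congr 1
    push_cast
    ring
  calc ∑' n : ℕ, (if (j - (n:ℤ)) ≤ j then eP ((((j - (n:ℤ)) : ℤ):ℝ) * s) else 0)
      = ∑' n : ℕ, eP ((j:ℝ)*s) * (eP (-s))^n := tsum_congr hterm
    _ = eP ((j:ℝ)*s) * ∑' n : ℕ, (eP (-s))^n := ENNReal.tsum_mul_left
    _ = eP ((j:ℝ)*s) * (1 - eP (-s))⁻¹ := by rw [ENNReal.tsum_geometric]

lemma level_mass_le {ι : Type*} (f : ι → ℝ) (hf : ∀ x, 0 ≤ f x) (r : ℝ) (hr : 0 < r)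
    (hs : Summable (fun x => f x ^ r)) (hle : (∑' x, f x ^ r) ≤ 1)
    (E : ℤ → Finset ι) (hE : ∀ j x, x ∈ E j ↔ (f x ≠ 0 ∧ Int.log 2 (f x) = j)) :
    ∑' j : ℤ, eP ((j:ℝ)*r) * ((E j).card : ℝ≥0∞) ≤ 1 := by
  have hmem : ∀ j : ℤ, ∀ x ∈ E j, (2:ℝ)^(j:ℤ) ≤ f x := by
    intro j x hx
    obtain ⟨hx0, hxl⟩ := (hE j x).mp hx
    have hpos : 0 < f x := lt_of_le_of_ne (hf x) (Ne.symm hx0)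
    have := Int.zpow_log_le_self (b := 2) (by norm_num) hpos
    rwa [hxl] at this
  have hterm : ∀ j : ℤ, eP ((j:ℝ)*r) * ((E j).card : ℝ≥0∞)
      ≤ ∑ x ∈ E j, ENNReal.ofReal (f x ^ r) := by
    intro j
    have h1 : eP ((j:ℝ)*r) * ((E j).card : ℝ≥0∞) = ∑ _x ∈ E j, eP ((j:ℝ)*r) := by
      rw [Finset.sum_const, nsmul_eq_mul, mul_comm]
    rw [h1]
    apply Finset.sum_le_sum
    intro x hx
    simp only [eP]
    apply ENNReal.ofReal_le_ofReal
    have h2 : (2:ℝ) ^ ((j:ℝ)*r) = ((2:ℝ)^(j:ℤ)) ^ r := by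
      rw [← Real.rpow_intCast (2:ℝ) j, ← Real.rpow_mul (by norm_num : (0:ℝ) ≤ 2)]
    rw [h2]
    exact Real.rpow_le_rpow (by positivity) (hmem j x hx) hr.le
  calc ∑' j : ℤ, eP ((j:ℝ)*r) * ((E j).card : ℝ≥0∞)
      ≤ ∑' j : ℤ, ∑ x ∈ E j, ENNReal.ofReal (f x ^ r) := ENNReal.tsum_le_tsum hterm
    _ = ∑' x, ENNReal.ofReal (f x ^ r) := by
        rw [← decomp_tsum_finset f E hE _ ?_]
        intro x hx
        rw [hx, Real.zero_rpow hr.ne', ENNReal.ofReal_zero]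
    _ = ENNReal.ofReal (∑' x, f x ^ r) := by
        rw [ENNReal.ofReal_tsum_of_nonneg (fun x => Real.rpow_nonneg (hf x) r) hs]
    _ ≤ 1 := by
        rw [← ENNReal.ofReal_one]
        exact ENNReal.ofReal_le_ofReal hle


lemma kernel_sum (N : ℕ) (β : ℝ) (hβ0 : 0 < β) (hβN : β < N) :
    ∃ C₁ > 0, ∀ (x : Fin N → ℤ) (F : Finset (Fin N → ℤ)),
      ∑ y ∈ F, (1 + (latticeDist N x y : ℝ)) ^ (-β) ≤ C₁ * (F.card : ℝ) ^ (1 - β/N) := by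
  classical
  have hN : 0 < N := by
    by_contra h
    push_neg at h
    interval_cases N
    · simp at hβN; linarith
  have hNR : (0:ℝ) < N := by exact_mod_cast hN
  set q : ℝ := (2:ℝ) ^ ((N:ℝ) - β) with hq_def
  set ρ : ℝ := (2:ℝ) ^ (-β) with hρ_def
  have hq1 : 1 < q := by
    rw [hq_def]
    apply Real.one_lt_rpow_iff_of_pos (by norm_num) |>.mpr
    exact Or.inl ⟨by norm_num, by linarith⟩
  have hρ0 : 0 < ρ := Real.rpow_pos_of_pos (by norm_num) _
  have hρ1 : ρ < 1 := by
    rw [hρ_def]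
    exact Real.rpow_lt_one_of_one_lt_of_neg (by norm_num) (by linarith)
  have hCpos : (0:ℝ) < (8:ℝ)^N * 2^N / (q - 1) + 1 / (1 - ρ) := by
    have h1 : (0:ℝ) < q - 1 := by linarith
    have h2 : (0:ℝ) < 1 - ρ := by linarith
    have := div_pos (by positivity : (0:ℝ) < (8:ℝ)^N * 2^N) h1
    have := div_pos one_pos h2
    linarith
  refine ⟨(8:ℝ)^N * 2^N / (q - 1) + 1 / (1 - ρ), hCpos, ?_⟩
  intro x F
  set m := F.card with hm_def
  rcases Nat.eq_zero_or_pos m with hm | hm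
  · have : F = ∅ := Finset.card_eq_zero.mp hm
    subst this
    simp only [Finset.sum_empty]
    have h : (0:ℝ) ≤ ((m : ℝ)) ^ (1 - β/N) := Real.rpow_nonneg (by positivity) _
    exact mul_nonneg hCpos.le h
  have hmR : (0:ℝ) < m := by exact_mod_cast hm
  -- the integer-valued "1 + distance"
  set n : (Fin N → ℤ) → ℕ := fun y => (1 + latticeDist N x y).toNat with hn_def
  have hn1 : ∀ y, 1 ≤ n y := by
    intro y
    have := latticeDist_nonneg N x y
    simp only [hn_def]
    omega
  have hncast : ∀ y, ((n y : ℝ)) = 1 + (latticeDist N x y : ℝ) := by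
    intro y
    have h0 := latticeDist_nonneg N x y
    have : ((1 + latticeDist N x y).toNat : ℤ) = 1 + latticeDist N x y := Int.toNat_of_nonneg (by omega)
    simp only [hn_def]
    exact_mod_cast this
  set g : (Fin N → ℤ) → ℕ := fun y => Nat.log 2 (n y) with hg_def
  set M : ℕ := F.sup n + 1 with hM_def
  have hgM : ∀ y ∈ F, g y ∈ Finset.range M := by
    intro y hy
    rw [Finset.mem_range]
    have h1 : g y ≤ n y := Nat.log_le_self 2 (n y)
    have h2 : n y ≤ F.sup n := Finset.le_sup hy
    omega
  set K : ℕ := Nat.clog (2^N) m with hK_def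
  have hb2 : 1 < 2^N := Nat.one_lt_two_pow_iff.mpr (by omega)
  -- fiberwise decomposition
  have hsplit : ∑ y ∈ F, (1 + (latticeDist N x y : ℝ)) ^ (-β)
      = ∑ k ∈ Finset.range M, ∑ y ∈ F.filter (fun y => g y = k),
          (1 + (latticeDist N x y : ℝ)) ^ (-β) :=
    (Finset.sum_fiberwise_of_maps_to hgM _).symm
  -- per-fiber bound
  have hfiber : ∀ k, ∑ y ∈ F.filter (fun y => g y = k), (1 + (latticeDist N x y : ℝ)) ^ (-β)
      ≤ if k < K then (8:ℝ)^N * q^k else (m:ℝ) * ρ^k := by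
    intro k
    have hcard1 : (F.filter (fun y => g y = k)).card ≤ m := by
      apply Finset.card_le_card (Finset.filter_subset _ _)
    have hcard2 : (F.filter (fun y => g y = k)).card ≤ 8^N * 2^(k*N) := by
      have hsub : F.filter (fun y => g y = k) ⊆
          F.filter (fun y => latticeDist N x y ≤ ((2^(k+1) : ℕ) : ℤ)) := by
        intro y hy
        rw [Finset.mem_filter] at hy ⊢
        refine ⟨hy.1, ?_⟩
        have hlt : n y < 2^(k+1) := by
          rw [← hy.2]
          exact Nat.lt_pow_succ_log_self (by norm_num) _
        have : (1 + latticeDist N x y) ≤ ((2^(k+1) : ℕ) : ℤ) := by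
          have h0 := latticeDist_nonneg N x y
          have : ((n y : ℕ) : ℤ) = 1 + latticeDist N x y := Int.toNat_of_nonneg (by omega)
          omega
        omega
      calc (F.filter (fun y => g y = k)).card
          ≤ (F.filter (fun y => latticeDist N x y ≤ ((2^(k+1) : ℕ) : ℤ))).card :=
            Finset.card_le_card hsub
        _ ≤ (2*2^(k+1)+1)^N := count_ball N x (2^(k+1)) F
        _ ≤ (8 * 2^k)^N := by
            apply Nat.pow_le_pow_left
            have : 2*2^(k+1) + 1 ≤ 8 * 2^k := by
              rw [pow_succ]
              have : 1 ≤ 2^k := Nat.one_le_two_pow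
              omega
            exact this
        _ = 8^N * (2^k)^N := by rw [mul_pow]
        _ = 8^N * 2^(k*N) := by rw [← pow_mul]
    -- each term in the fiber is at most (2^k)^(-β)
    have hterm : ∀ y ∈ F.filter (fun y => g y = k),
        (1 + (latticeDist N x y : ℝ)) ^ (-β) ≤ ((2:ℝ)^k) ^ (-β) := by
      intro y hy
      rw [Finset.mem_filter] at hy
      have hle : (2:ℕ)^k ≤ n y := by
        rw [← hy.2]
        exact Nat.pow_log_le_self 2 (by have := hn1 y; omega)
      have hleR : ((2:ℝ))^k ≤ ((n y : ℝ)) := by exact_mod_cast hle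
      rw [← hncast y]
      apply Real.rpow_le_rpow_of_nonpos (by positivity) hleR (by linarith)
    have hsum : ∑ y ∈ F.filter (fun y => g y = k), (1 + (latticeDist N x y : ℝ)) ^ (-β)
        ≤ ((F.filter (fun y => g y = k)).card : ℝ) * ((2:ℝ)^k) ^ (-β) := by
      calc _ ≤ ∑ _y ∈ F.filter (fun y => g y = k), ((2:ℝ)^k) ^ (-β) := Finset.sum_le_sum hterm
        _ = _ := by rw [Finset.sum_const, nsmul_eq_mul]
    have h2kβ : (0:ℝ) < ((2:ℝ)^k) ^ (-β) := Real.rpow_pos_of_pos (by positivity) _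
    by_cases hk : k < K
    · rw [if_pos hk]
      calc _ ≤ ((F.filter (fun y => g y = k)).card : ℝ) * ((2:ℝ)^k) ^ (-β) := hsum
        _ ≤ ((8:ℝ)^N * 2^(k*N)) * ((2:ℝ)^k) ^ (-β) := by
            apply mul_le_mul_of_nonneg_right _ h2kβ.le
            exact_mod_cast hcard2
        _ = (8:ℝ)^N * q^k := by
            rw [mul_assoc]
            congr 1
            rw [hq_def]
            rw [← Real.rpow_natCast (2:ℝ) (k*N), ← Real.rpow_natCast (2:ℝ) k,
              ← Real.rpow_mul (by norm_num : (0:ℝ) ≤ 2),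
              ← Real.rpow_add (by norm_num : (0:ℝ) < 2),
              ← Real.rpow_natCast ((2:ℝ) ^ ((N:ℝ) - β)) k,
              ← Real.rpow_mul (by norm_num : (0:ℝ) ≤ 2)]
            congr 1
            push_cast
            ring
    · rw [if_neg hk]
      calc _ ≤ ((F.filter (fun y => g y = k)).card : ℝ) * ((2:ℝ)^k) ^ (-β) := hsum
        _ ≤ (m:ℝ) * ((2:ℝ)^k) ^ (-β) := by
            apply mul_le_mul_of_nonneg_right _ h2kβ.le
            exact_mod_cast hcard1
        _ = (m:ℝ) * ρ^k := by
            congr 1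
            rw [hρ_def, ← Real.rpow_natCast (2:ℝ) k,
              ← Real.rpow_mul (by norm_num : (0:ℝ) ≤ 2),
              ← Real.rpow_natCast ((2:ℝ) ^ (-β)) k,
              ← Real.rpow_mul (by norm_num : (0:ℝ) ≤ 2)]
            congr 1
            ring
  -- head coefficient bound : q^K ≤ 2^N * m^(1-β/N)
  have hKpow : ((2:ℕ)^N)^K ≤ 2^N * m := by
    rcases Nat.eq_zero_or_pos K with hK0 | hKpos
    · rw [hK0, pow_zero]
      have h2N : 0 < 2^N := pow_pos (by norm_num) N
      exact Nat.one_le_iff_ne_zero.mpr (Nat.mul_ne_zero (by omega) (by omega))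
    · have hm2 : 1 < m := by
        by_contra h
        push_neg at h
        have hm1 : m = 1 := by omega
        rw [hm1, Nat.clog_one_right] at hK_def
        omega
      have hlt := Nat.pow_pred_clog_lt_self hb2 hm2
      rw [← hK_def] at hlt
      have hstep : ((2:ℕ)^N)^K = ((2:ℕ)^N)^(K-1) * 2^N := by
        rw [← pow_succ]
        congr 1
        omega
      rw [hstep]
      calc ((2:ℕ)^N)^(K-1) * 2^N ≤ m * 2^N := Nat.mul_le_mul_right _ (le_of_lt hlt)
        _ = 2^N * m := by ring
  have hKpow' : m ≤ ((2:ℕ)^N)^K := Nat.le_pow_clog hb2 m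
  set P : ℕ := ((2:ℕ)^N)^K with hP_def
  have hexp1 : (0:ℝ) < 1 - β/N := by
    rw [sub_pos, div_lt_one hNR]; exact hβN
  have hpow2R : ((P:ℕ) : ℝ) = (2:ℝ) ^ (((N*K : ℕ) : ℝ)) := by
    rw [Real.rpow_natCast]
    rw [hP_def]
    push_cast
    rw [← pow_mul]
  have hqK : q^K ≤ (2:ℝ)^N * (m:ℝ)^(1-β/N) := by
    have h1 : q^K = ((P:ℕ) : ℝ)^(1-β/N) := by
      rw [hpow2R, ← Real.rpow_natCast q K, hq_def,
        ← Real.rpow_mul (by norm_num : (0:ℝ) ≤ 2),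
        ← Real.rpow_mul (by norm_num : (0:ℝ) ≤ 2)]
      congr 1
      push_cast
      field_simp
    rw [h1]
    calc ((P:ℕ) : ℝ)^(1-β/N) ≤ ((2^N * m : ℕ) : ℝ)^(1-β/N) := by
          apply Real.rpow_le_rpow (by positivity) (by exact_mod_cast hKpow) hexp1.le
      _ = ((2:ℝ)^N)^(1-β/N) * (m:ℝ)^(1-β/N) := by
          push_cast
          rw [Real.mul_rpow (by positivity) (by positivity)]
      _ ≤ (2:ℝ)^N * (m:ℝ)^(1-β/N) := by
          apply mul_le_mul_of_nonneg_right _ (Real.rpow_nonneg (by positivity) _)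
          calc ((2:ℝ)^N)^(1-β/N) ≤ ((2:ℝ)^N)^(1:ℝ) := by
                apply Real.rpow_le_rpow_of_exponent_le
                · exact_mod_cast Nat.one_le_two_pow
                · rw [sub_le_self_iff]; positivity
            _ = (2:ℝ)^N := Real.rpow_one _
  have hρK : ρ^K ≤ (m:ℝ)^(-β/N) := by
    have h1 : ρ^K = ((P:ℕ) : ℝ)^(-β/N) := by
      rw [hpow2R, ← Real.rpow_natCast ρ K, hρ_def,
        ← Real.rpow_mul (by norm_num : (0:ℝ) ≤ 2),
        ← Real.rpow_mul (by norm_num : (0:ℝ) ≤ 2)]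
      congr 1
      push_cast
      field_simp
    rw [h1]
    apply Real.rpow_le_rpow_of_nonpos hmR (by exact_mod_cast hKpow')
    rw [neg_div]
    exact neg_nonpos.mpr (by positivity)
  -- assemble
  rw [hsplit]
  have h2 : (0:ℝ) < 1 - ρ := by linarith
  have hq0 : (0:ℝ) < q - 1 := by linarith
  calc ∑ k ∈ Finset.range M, ∑ y ∈ F.filter (fun y => g y = k),
        (1 + (latticeDist N x y : ℝ)) ^ (-β)
      ≤ ∑ k ∈ Finset.range M, (if k < K then (8:ℝ)^N * q^k else (m:ℝ) * ρ^k) :=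
        Finset.sum_le_sum (fun k _ => hfiber k)
    _ = (∑ k ∈ (Finset.range M).filter (· < K), (8:ℝ)^N * q^k)
        + ∑ k ∈ (Finset.range M).filter (fun k => ¬ k < K), (m:ℝ) * ρ^k :=
        Finset.sum_ite _ _
    _ ≤ (∑ k ∈ Finset.range K, (8:ℝ)^N * q^k)
        + ∑ k ∈ Finset.Ico K (M+K), (m:ℝ) * ρ^k := by
        apply add_le_add
        · apply Finset.sum_le_sum_of_subset_of_nonneg
          · intro k hk
            rw [Finset.mem_filter, Finset.mem_range] at hk
            rw [Finset.mem_range]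
            exact hk.2
          · intro k _ _
            positivity
        · apply Finset.sum_le_sum_of_subset_of_nonneg
          · intro k hk
            rw [Finset.mem_filter, Finset.mem_range] at hk
            rw [Finset.mem_Ico]
            omega
          · intro k _ _
            positivity
    _ ≤ (8:ℝ)^N * (q^K / (q-1)) + (m:ℝ) * (ρ^K / (1-ρ)) := by
        apply add_le_add
        · rw [← Finset.mul_sum]
          apply mul_le_mul_of_nonneg_left _ (by positivity)
          rw [geom_sum_eq (by intro h; rw [h] at hq1; exact lt_irrefl 1 hq1 : q ≠ 1) K]
          exact div_le_div₀ (by positivity) (by linarith [pow_pos (lt_trans one_pos hq1) K]) hq0 le_rfl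
        · rw [← Finset.mul_sum]
          apply mul_le_mul_of_nonneg_left _ (by positivity)
          rw [Finset.sum_Ico_eq_sum_range]
          simp only [Nat.add_sub_cancel]
          have : ∀ i, ρ^(K+i) = ρ^K * ρ^i := fun i => pow_add ρ K i
          rw [Finset.sum_congr rfl (fun i _ => this i), ← Finset.mul_sum]
          rw [div_eq_mul_inv]
          apply mul_le_mul_of_nonneg_left _ (by positivity)
          have hsum := Summable.sum_le_tsum (Finset.range M) (fun i _ => (pow_nonneg hρ0.le i))
            (summable_geometric_of_lt_one hρ0.le hρ1)
          rw [tsum_geometric_of_lt_one hρ0.le hρ1] at hsum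
          exact hsum
    _ ≤ (8:ℝ)^N * ((2^N * (m:ℝ)^(1-β/N)) / (q-1)) + (m:ℝ) * ((m:ℝ)^(-β/N) / (1-ρ)) := by
        apply add_le_add
        · apply mul_le_mul_of_nonneg_left _ (by positivity)
          exact div_le_div₀ (by positivity) hqK hq0 le_rfl
        · apply mul_le_mul_of_nonneg_left _ (by positivity)
          exact div_le_div₀ (Real.rpow_nonneg hmR.le _) hρK h2 le_rfl
    _ = ((8:ℝ)^N * 2^N / (q - 1) + 1 / (1 - ρ)) * (m:ℝ)^(1-β/N) := by
        have hmm : (m:ℝ) * (m:ℝ)^(-β/N) = (m:ℝ)^(1-β/N) := by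
          nth_rewrite 1 [← Real.rpow_one (m:ℝ)]
          rw [← Real.rpow_add hmR]
          congr 1
          ring
        have h3 : (m:ℝ) * ((m:ℝ)^(-β/N) / (1-ρ)) = (m:ℝ)^(1-β/N) / (1-ρ) := by
          rw [← hmm]
          ring
        rw [h3]
        ring

lemma bilinear_le (N : ℕ) (β : ℝ) (C' C₁ : ℝ) (hC' : 0 ≤ C')
    (R : (Fin N → ℤ) → (Fin N → ℤ) → ℝ)
    (hR : ∀ x y, 0 ≤ R x y ∧ R x y ≤ C' * ((1 + (latticeDist N x y : ℝ)) ^ (-β)))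
    (hker : ∀ (x : Fin N → ℤ) (F : Finset (Fin N → ℤ)),
      ∑ y ∈ F, (1 + (latticeDist N x y : ℝ)) ^ (-β) ≤ C₁ * (F.card : ℝ) ^ (1 - β/N))
    (E F : Finset (Fin N → ℤ)) :
    (∑ x ∈ E, ∑ y ∈ F, R x y) ≤ C' * C₁ * (E.card : ℝ) * (F.card : ℝ) ^ (1-β/N)
    ∧ (∑ x ∈ E, ∑ y ∈ F, R x y) ≤ C' * C₁ * (F.card : ℝ) * (E.card : ℝ) ^ (1-β/N) := by
  constructor
  · calc ∑ x ∈ E, ∑ y ∈ F, R x y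
        ≤ ∑ _x ∈ E, C' * (C₁ * (F.card : ℝ) ^ (1-β/N)) := by
          apply Finset.sum_le_sum
          intro x _
          calc ∑ y ∈ F, R x y ≤ ∑ y ∈ F, C' * ((1 + (latticeDist N x y : ℝ)) ^ (-β)) :=
                Finset.sum_le_sum (fun y _ => (hR x y).2)
            _ = C' * ∑ y ∈ F, ((1 + (latticeDist N x y : ℝ)) ^ (-β)) := by
                rw [Finset.mul_sum]
            _ ≤ C' * (C₁ * (F.card : ℝ) ^ (1-β/N)) :=
                mul_le_mul_of_nonneg_left (hker x F) hC'
      _ = C' * C₁ * (E.card : ℝ) * (F.card : ℝ) ^ (1-β/N) := by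
          rw [Finset.sum_const, nsmul_eq_mul]
          ring
  · rw [Finset.sum_comm]
    calc ∑ y ∈ F, ∑ x ∈ E, R x y
        ≤ ∑ _y ∈ F, C' * (C₁ * (E.card : ℝ) ^ (1-β/N)) := by
          apply Finset.sum_le_sum
          intro y _
          calc ∑ x ∈ E, R x y ≤ ∑ x ∈ E, C' * ((1 + (latticeDist N y x : ℝ)) ^ (-β)) := by
                apply Finset.sum_le_sum
                intro x _
                rw [latticeDist_comm N y x]
                exact (hR x y).2
            _ = C' * ∑ x ∈ E, ((1 + (latticeDist N y x : ℝ)) ^ (-β)) := by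
                rw [Finset.mul_sum]
            _ ≤ C' * (C₁ * (E.card : ℝ) ^ (1-β/N)) :=
                mul_le_mul_of_nonneg_left (hker y E) hC'
      _ = C' * C₁ * (F.card : ℝ) * (E.card : ℝ) ^ (1-β/N) := by
          rw [Finset.sum_const, nsmul_eq_mul]
          ring

lemma core (N : ℕ) (α : ℝ) (hα0 : 0 < α) (hαN : α < N)
    (C' : ℝ) (hC' : 0 ≤ C')
    (R : (Fin N → ℤ) → (Fin N → ℤ) → ℝ)
    (hR : ∀ x y, 0 ≤ R x y ∧ R x y ≤ C' * ((1 + (latticeDist N x y : ℝ)) ^ (-((N:ℝ) - α))))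
    (C₁ : ℝ) (hC₁ : 0 < C₁)
    (hker : ∀ (x : Fin N → ℤ) (F : Finset (Fin N → ℤ)),
      ∑ y ∈ F, (1 + (latticeDist N x y : ℝ)) ^ (-((N:ℝ)-α)) ≤ C₁ * (F.card : ℝ) ^ (1 - ((N:ℝ)-α)/N)) :
    ∃ CC : ℝ≥0∞, CC ≠ ⊤ ∧ ∀ u v : (Fin N → ℤ) → ℝ,
      Summable (fun x => |u x| ^ (2*(N:ℝ)/(N+α))) →
      Summable (fun x => |v x| ^ (2*(N:ℝ)/(N+α))) →
      (∑' x, |u x| ^ (2*(N:ℝ)/(N+α))) ≤ 1 →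
      (∑' x, |v x| ^ (2*(N:ℝ)/(N+α))) ≤ 1 →
      (∑' x, ∑' y, ENNReal.ofReal (|u x|) * ENNReal.ofReal (R x y) * ENNReal.ofReal (|v y|)) ≤ CC := by
  classical
  have hNR : (0:ℝ) < N := lt_trans hα0 hαN
  set θ : ℝ := 1 - ((N:ℝ)-α)/N with hθ_def
  set r : ℝ := 2*(N:ℝ)/((N:ℝ)+α) with hr_def
  have hθα : θ = α / N := by rw [hθ_def]; field_simp; ring
  have hθ0 : 0 < θ := by rw [hθα]; positivity
  have hθ1 : θ < 1 := by rw [hθα, div_lt_one hNR]; exact hαN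
  have hNα : (0:ℝ) < (N:ℝ) + α := by linarith
  have hr0 : 0 < r := by rw [hr_def]; positivity
  set s : ℝ := 1 - r * θ with hs_def
  have hs0 : 0 < s := by
    rw [hs_def, hr_def, hθα]
    have : 2*(N:ℝ)/((N:ℝ)+α) * (α/N) = 2*α/((N:ℝ)+α) := by field_simp
    rw [this, sub_pos, div_lt_one hNα]
    linarith
  have hkey : 1 + s = r := by
    rw [hs_def, hr_def, hθα]
    field_simp
    ring
  set c2 : ℝ≥0∞ := ENNReal.ofReal (C'*C₁) with hc2_def
  set G : ℝ≥0∞ := (1 - eP (-s))⁻¹ with hG_def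
  have hG_ne_top : G ≠ ⊤ := by
    rw [hG_def, ENNReal.inv_ne_top]
    have h1 : eP (-s) < 1 := eP_lt_one (by linarith)
    intro h
    exact absurd (tsub_eq_zero_iff_le.mp h) (not_le.mpr h1)
  refine ⟨2 * (c2 * eP 2 * G), by
    apply ENNReal.mul_ne_top (by norm_num)
    exact ENNReal.mul_ne_top (ENNReal.mul_ne_top ENNReal.ofReal_ne_top (eP_ne_top 2)) hG_ne_top,
    ?_⟩
  intro u v hu hv hAu hAv
  set f : (Fin N → ℤ) → ℝ := fun x => |u x| with hf_def
  set g : (Fin N → ℤ) → ℝ := fun x => |v x| with hg_def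
  have hf0 : ∀ x, 0 ≤ f x := fun x => abs_nonneg _
  have hg0 : ∀ x, 0 ≤ g x := fun x => abs_nonneg _
  -- level sets are finite
  have hfinf : ∀ j : ℤ, {x : Fin N → ℤ | f x ≠ 0 ∧ Int.log 2 (f x) = j}.Finite := by
    intro j
    apply Set.Finite.subset (finite_level hu (ε := ((2:ℝ)^(j:ℤ)) ^ r) (by positivity))
    rintro x ⟨hx0, hxl⟩
    have hpos : 0 < f x := lt_of_le_of_ne (hf0 x) (Ne.symm hx0)
    have h2j : (2:ℝ)^(j:ℤ) ≤ f x := by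
      rw [← hxl]
      exact Int.zpow_log_le_self (by norm_num) hpos
    simp only [Set.mem_setOf_eq]
    exact Real.rpow_le_rpow (by positivity) h2j hr0.le
  have hfing : ∀ j : ℤ, {x : Fin N → ℤ | g x ≠ 0 ∧ Int.log 2 (g x) = j}.Finite := by
    intro j
    apply Set.Finite.subset (finite_level hv (ε := ((2:ℝ)^(j:ℤ)) ^ r) (by positivity))
    rintro x ⟨hx0, hxl⟩
    have hpos : 0 < g x := lt_of_le_of_ne (hg0 x) (Ne.symm hx0)
    have h2j : (2:ℝ)^(j:ℤ) ≤ g x := by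
      rw [← hxl]
      exact Int.zpow_log_le_self (by norm_num) hpos
    simp only [Set.mem_setOf_eq]
    exact Real.rpow_le_rpow (by positivity) h2j hr0.le
  set Ef : ℤ → Finset (Fin N → ℤ) := fun j => (hfinf j).toFinset with hEf_def
  set Eg : ℤ → Finset (Fin N → ℤ) := fun j => (hfing j).toFinset with hEg_def
  have hEf : ∀ j x, x ∈ Ef j ↔ (f x ≠ 0 ∧ Int.log 2 (f x) = j) := by
    intro j x
    rw [hEf_def]
    exact (hfinf j).mem_toFinset
  have hEg : ∀ j x, x ∈ Eg j ↔ (g x ≠ 0 ∧ Int.log 2 (g x) = j) := by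
    intro j x
    rw [hEg_def]
    exact (hfing j).mem_toFinset
  -- pointwise dyadic bounds
  have hfhi : ∀ j x, x ∈ Ef j → ENNReal.ofReal (f x) ≤ eP ((j:ℝ)+1) := by
    intro j x hx
    obtain ⟨hx0, hxl⟩ := (hEf j x).mp hx
    have h1 : f x ≤ (2:ℝ)^((j:ℤ)+1) := by
      rw [← hxl]
      exact le_of_lt (Int.lt_zpow_succ_log_self (by norm_num) (f x))
    simp only [eP]
    apply ENNReal.ofReal_le_ofReal
    have h2 : (2:ℝ) ^ ((j:ℝ)+1) = (2:ℝ)^((j:ℤ)+1) := by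
      rw [← Real.rpow_intCast (2:ℝ) (j+1)]
      push_cast
      ring_nf
    rw [h2]
    exact h1
  have hghi : ∀ k y, y ∈ Eg k → ENNReal.ofReal (g y) ≤ eP ((k:ℝ)+1) := by
    intro k y hy
    obtain ⟨hy0, hyl⟩ := (hEg k y).mp hy
    have h1 : g y ≤ (2:ℝ)^((k:ℤ)+1) := by
      rw [← hyl]
      exact le_of_lt (Int.lt_zpow_succ_log_self (by norm_num) (g y))
    simp only [eP]
    apply ENNReal.ofReal_le_ofReal
    have h2 : (2:ℝ) ^ ((k:ℝ)+1) = (2:ℝ)^((k:ℤ)+1) := by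
      rw [← Real.rpow_intCast (2:ℝ) (k+1)]
      push_cast
      ring_nf
    rw [h2]
    exact h1
  -- ℓʳ mass bounds
  have hA : ∑' j:ℤ, eP ((j:ℝ)*r) * ((Ef j).card : ℝ≥0∞) ≤ 1 :=
    level_mass_le f hf0 r hr0 hu hAu Ef hEf
  have hB : ∑' k:ℤ, eP ((k:ℝ)*r) * ((Eg k).card : ℝ≥0∞) ≤ 1 :=
    level_mass_le g hg0 r hr0 hv hAv Eg hEg
  have hbk : ∀ k:ℤ, ((Eg k).card : ℝ≥0∞) ≤ eP (-((k:ℝ)*r)) := by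
    intro k
    rw [eP_neg]
    rw [ENNReal.le_inv_iff_mul_le, mul_comm]
    exact le_trans (ENNReal.le_tsum k) hB
  have haj : ∀ j:ℤ, ((Ef j).card : ℝ≥0∞) ≤ eP (-((j:ℝ)*r)) := by
    intro j
    rw [eP_neg]
    rw [ENNReal.le_inv_iff_mul_le, mul_comm]
    exact le_trans (ENNReal.le_tsum j) hA
  -- decomposition of the double sum into dyadic levels
  have hdec : (∑' x, ∑' y, ENNReal.ofReal (f x) * ENNReal.ofReal (R x y) * ENNReal.ofReal (g y))
      = ∑' j:ℤ, ∑' k:ℤ, ∑ x ∈ Ef j, ∑ y ∈ Eg k,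
          ENNReal.ofReal (f x) * ENNReal.ofReal (R x y) * ENNReal.ofReal (g y) := by
    rw [decomp_tsum_finset f Ef hEf
      (fun x => ∑' y, ENNReal.ofReal (f x) * ENNReal.ofReal (R x y) * ENNReal.ofReal (g y))
      (fun x hx => by simp [hx])]
    apply tsum_congr
    intro j
    rw [Finset.sum_congr rfl (fun x _ => decomp_tsum_finset g Eg hEg
      (fun y => ENNReal.ofReal (f x) * ENNReal.ofReal (R x y) * ENNReal.ofReal (g y))
      (fun y hy => by simp [hy]))]
    exact (Summable.tsum_finsetSum (fun _ _ => ENNReal.summable)).symm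
  -- single-block estimate
  have hS : ∀ j k : ℤ, (∑ x ∈ Ef j, ∑ y ∈ Eg k,
        ENNReal.ofReal (f x) * ENNReal.ofReal (R x y) * ENNReal.ofReal (g y))
      ≤ eP ((j:ℝ)+1) * eP ((k:ℝ)+1) * (c2 *
        (if k ≤ j then ((Ef j).card : ℝ≥0∞) * ((Eg k).card : ℝ≥0∞) ^ θ
         else ((Eg k).card : ℝ≥0∞) * ((Ef j).card : ℝ≥0∞) ^ θ)) := by
    intro j k
    have h1 : (∑ x ∈ Ef j, ∑ y ∈ Eg k,
          ENNReal.ofReal (f x) * ENNReal.ofReal (R x y) * ENNReal.ofReal (g y))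
        ≤ eP ((j:ℝ)+1) * eP ((k:ℝ)+1) * ∑ x ∈ Ef j, ∑ y ∈ Eg k, ENNReal.ofReal (R x y) := by
      calc (∑ x ∈ Ef j, ∑ y ∈ Eg k,
            ENNReal.ofReal (f x) * ENNReal.ofReal (R x y) * ENNReal.ofReal (g y))
          ≤ ∑ x ∈ Ef j, ∑ y ∈ Eg k,
            eP ((j:ℝ)+1) * eP ((k:ℝ)+1) * ENNReal.ofReal (R x y) := by
            apply Finset.sum_le_sum
            intro x hx
            apply Finset.sum_le_sum
            intro y hy
            calc ENNReal.ofReal (f x) * ENNReal.ofReal (R x y) * ENNReal.ofReal (g y)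
                ≤ eP ((j:ℝ)+1) * ENNReal.ofReal (R x y) * eP ((k:ℝ)+1) :=
                  mul_le_mul' (mul_le_mul' (hfhi j x hx) le_rfl) (hghi k y hy)
              _ = eP ((j:ℝ)+1) * eP ((k:ℝ)+1) * ENNReal.ofReal (R x y) := by ring
        _ = eP ((j:ℝ)+1) * eP ((k:ℝ)+1) * ∑ x ∈ Ef j, ∑ y ∈ Eg k, ENNReal.ofReal (R x y) := by
            simp only [← Finset.mul_sum]
    refine le_trans h1 (mul_le_mul' le_rfl ?_)
    have hsum_eq : (∑ x ∈ Ef j, ∑ y ∈ Eg k, ENNReal.ofReal (R x y))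
        = ENNReal.ofReal (∑ x ∈ Ef j, ∑ y ∈ Eg k, R x y) := by
      rw [ENNReal.ofReal_sum_of_nonneg (fun x _ => Finset.sum_nonneg (fun y _ => (hR x y).1))]
      exact Finset.sum_congr rfl (fun x _ =>
        (ENNReal.ofReal_sum_of_nonneg (fun y _ => (hR x y).1)).symm)
    rw [hsum_eq]
    obtain ⟨hbil1, hbil2⟩ := bilinear_le N ((N:ℝ)-α) C' C₁ hC' R hR hker (Ef j) (Eg k)
    by_cases hjk : k ≤ j
    · rw [if_pos hjk]
      calc ENNReal.ofReal (∑ x ∈ Ef j, ∑ y ∈ Eg k, R x y)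
          ≤ ENNReal.ofReal (C' * C₁ * ((Ef j).card : ℝ) * ((Eg k).card : ℝ) ^ (1-((N:ℝ)-α)/N)) :=
            ENNReal.ofReal_le_ofReal hbil1
        _ = c2 * (((Ef j).card : ℝ≥0∞) * ((Eg k).card : ℝ≥0∞) ^ θ) := by
            rw [hc2_def, ← hθ_def]
            rw [ENNReal.ofReal_mul (by positivity), ENNReal.ofReal_mul (by positivity),
              ENNReal.ofReal_natCast,
              ← ENNReal.ofReal_rpow_of_nonneg (by positivity) hθ0.le,
              ENNReal.ofReal_natCast, mul_assoc]
    · rw [if_neg hjk]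
      calc ENNReal.ofReal (∑ x ∈ Ef j, ∑ y ∈ Eg k, R x y)
          ≤ ENNReal.ofReal (C' * C₁ * ((Eg k).card : ℝ) * ((Ef j).card : ℝ) ^ (1-((N:ℝ)-α)/N)) :=
            ENNReal.ofReal_le_ofReal hbil2
        _ = c2 * (((Eg k).card : ℝ≥0∞) * ((Ef j).card : ℝ≥0∞) ^ θ) := by
            rw [hc2_def, ← hθ_def]
            rw [ENNReal.ofReal_mul (by positivity), ENNReal.ofReal_mul (by positivity),
              ENNReal.ofReal_natCast,
              ← ENNReal.ofReal_rpow_of_nonneg (by positivity) hθ0.le,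
              ENNReal.ofReal_natCast, mul_assoc]
  -- the two split pieces
  set U : ℤ → ℤ → ℝ≥0∞ := fun j k =>
    if k ≤ j then c2 * eP 2 * (eP (j:ℝ) * ((Ef j).card : ℝ≥0∞)) * eP ((k:ℝ)*s) else 0
    with hU_def
  set V : ℤ → ℤ → ℝ≥0∞ := fun j k =>
    if j ≤ k - 1 then c2 * eP 2 * (eP (k:ℝ) * ((Eg k).card : ℝ≥0∞)) * eP ((j:ℝ)*s) else 0
    with hV_def
  -- pointwise: the block bound is at most U + V
  have hUV : ∀ j k : ℤ, eP ((j:ℝ)+1) * eP ((k:ℝ)+1) * (c2 *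
        (if k ≤ j then ((Ef j).card : ℝ≥0∞) * ((Eg k).card : ℝ≥0∞) ^ θ
         else ((Eg k).card : ℝ≥0∞) * ((Ef j).card : ℝ≥0∞) ^ θ)) ≤ U j k + V j k := by
    intro j k
    by_cases hjk : k ≤ j
    · rw [if_pos hjk, hU_def]
      simp only [if_pos hjk]
      have hVz : V j k = 0 := by
        rw [hV_def]
        simp only
        rw [if_neg (by omega)]
      rw [hVz, add_zero]
      have hb : ((Eg k).card : ℝ≥0∞)^θ ≤ eP (-((k:ℝ)*r)*θ) := by
        rw [← eP_rpow _ hθ0.le]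
        exact ENNReal.rpow_le_rpow (hbk k) hθ0.le
      calc eP ((j:ℝ)+1) * eP ((k:ℝ)+1) * (c2 * (((Ef j).card : ℝ≥0∞) * ((Eg k).card : ℝ≥0∞) ^ θ))
          ≤ eP ((j:ℝ)+1) * eP ((k:ℝ)+1) * (c2 * (((Ef j).card : ℝ≥0∞) * eP (-((k:ℝ)*r)*θ))) := by
            exact mul_le_mul' le_rfl (mul_le_mul' le_rfl (mul_le_mul' le_rfl hb))
        _ = c2 * eP 2 * (eP (j:ℝ) * ((Ef j).card : ℝ≥0∞)) * eP ((k:ℝ)*s) := by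
            rw [eP_add (j:ℝ) 1, eP_add (k:ℝ) 1,
              show (2:ℝ) = 1+1 by norm_num, eP_add (1:ℝ) 1,
              show (k:ℝ)*s = (k:ℝ) + (-((k:ℝ)*r)*θ) by rw [hs_def]; ring,
              eP_add (k:ℝ) (-((k:ℝ)*r)*θ)]
            ring
    · rw [if_neg hjk]
      have hUz : U j k = 0 := by
        rw [hU_def]
        simp only
        rw [if_neg hjk]
      rw [hUz, zero_add, hV_def]
      simp only
      rw [if_pos (by omega : j ≤ k - 1)]
      have hb : ((Ef j).card : ℝ≥0∞)^θ ≤ eP (-((j:ℝ)*r)*θ) := by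
        rw [← eP_rpow _ hθ0.le]
        exact ENNReal.rpow_le_rpow (haj j) hθ0.le
      calc eP ((j:ℝ)+1) * eP ((k:ℝ)+1) * (c2 * (((Eg k).card : ℝ≥0∞) * ((Ef j).card : ℝ≥0∞) ^ θ))
          ≤ eP ((j:ℝ)+1) * eP ((k:ℝ)+1) * (c2 * (((Eg k).card : ℝ≥0∞) * eP (-((j:ℝ)*r)*θ))) := by
            exact mul_le_mul' le_rfl (mul_le_mul' le_rfl (mul_le_mul' le_rfl hb))
        _ = c2 * eP 2 * (eP (k:ℝ) * ((Eg k).card : ℝ≥0∞)) * eP ((j:ℝ)*s) := by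
            rw [eP_add (j:ℝ) 1, eP_add (k:ℝ) 1,
              show (2:ℝ) = 1+1 by norm_num, eP_add (1:ℝ) 1,
              show (j:ℝ)*s = (j:ℝ) + (-((j:ℝ)*r)*θ) by rw [hs_def]; ring,
              eP_add (j:ℝ) (-((j:ℝ)*r)*θ)]
            ring
  -- sum the two pieces
  have hT1 : ∑' j:ℤ, ∑' k:ℤ, U j k ≤ c2 * eP 2 * G := by
    have h1 : ∀ j:ℤ, ∑' k:ℤ, U j k
        = (c2 * eP 2 * G) * (eP ((j:ℝ)*r) * ((Ef j).card : ℝ≥0∞)) := by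
      intro j
      have h2 : ∀ k:ℤ, U j k = (c2 * eP 2 * (eP (j:ℝ) * ((Ef j).card : ℝ≥0∞)))
          * (if k ≤ j then eP ((k:ℝ)*s) else 0) := by
        intro k
        rw [hU_def, mul_ite, mul_zero]
      rw [tsum_congr h2, ENNReal.tsum_mul_left, geom_tail s hs0 j]
      rw [show eP ((j:ℝ)*s) * (1 - eP (-s))⁻¹ = eP ((j:ℝ)*s) * G by rw [hG_def]]
      rw [show eP ((j:ℝ)*r) = eP (j:ℝ) * eP ((j:ℝ)*s) by
        rw [← eP_add]
        congr 1
        rw [← hkey]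
        ring]
      ring
    rw [tsum_congr h1, ENNReal.tsum_mul_left]
    calc (c2 * eP 2 * G) * ∑' j:ℤ, eP ((j:ℝ)*r) * ((Ef j).card : ℝ≥0∞)
        ≤ (c2 * eP 2 * G) * 1 := mul_le_mul' le_rfl hA
      _ = c2 * eP 2 * G := mul_one _
  have hT2 : ∑' j:ℤ, ∑' k:ℤ, V j k ≤ c2 * eP 2 * G := by
    rw [ENNReal.tsum_comm]
    have h1 : ∀ k:ℤ, ∑' j:ℤ, V j k
        ≤ (c2 * eP 2 * G) * (eP ((k:ℝ)*r) * ((Eg k).card : ℝ≥0∞)) := by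
      intro k
      have h2 : ∀ j:ℤ, V j k = (c2 * eP 2 * (eP (k:ℝ) * ((Eg k).card : ℝ≥0∞)))
          * (if j ≤ k - 1 then eP ((j:ℝ)*s) else 0) := by
        intro j
        rw [hV_def, mul_ite, mul_zero]
      rw [tsum_congr h2, ENNReal.tsum_mul_left, geom_tail s hs0 (k-1)]
      have h3 : eP (((k-1:ℤ):ℝ)*s) ≤ eP ((k:ℝ)*s) := by
        apply eP_mono
        have : ((k-1:ℤ):ℝ) = (k:ℝ) - 1 := by push_cast; ring
        rw [this]
        nlinarith [hs0]
      calc (c2 * eP 2 * (eP (k:ℝ) * ((Eg k).card : ℝ≥0∞))) * (eP (((k-1:ℤ):ℝ)*s) * (1 - eP (-s))⁻¹)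
          ≤ (c2 * eP 2 * (eP (k:ℝ) * ((Eg k).card : ℝ≥0∞))) * (eP ((k:ℝ)*s) * G) := by
            rw [hG_def]
            exact mul_le_mul' le_rfl (mul_le_mul' h3 le_rfl)
        _ = (c2 * eP 2 * G) * (eP ((k:ℝ)*r) * ((Eg k).card : ℝ≥0∞)) := by
            rw [show eP ((k:ℝ)*r) = eP (k:ℝ) * eP ((k:ℝ)*s) by
              rw [← eP_add]
              congr 1
              rw [← hkey]
              ring]
            ring
    calc ∑' k:ℤ, ∑' j:ℤ, V j k
        ≤ ∑' k:ℤ, (c2 * eP 2 * G) * (eP ((k:ℝ)*r) * ((Eg k).card : ℝ≥0∞)) :=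
          ENNReal.tsum_le_tsum h1
      _ = (c2 * eP 2 * G) * ∑' k:ℤ, eP ((k:ℝ)*r) * ((Eg k).card : ℝ≥0∞) :=
          ENNReal.tsum_mul_left
      _ ≤ (c2 * eP 2 * G) * 1 := mul_le_mul' le_rfl hB
      _ = c2 * eP 2 * G := mul_one _
  -- conclusion
  calc (∑' x, ∑' y, ENNReal.ofReal (f x) * ENNReal.ofReal (R x y) * ENNReal.ofReal (g y))
      = ∑' j:ℤ, ∑' k:ℤ, ∑ x ∈ Ef j, ∑ y ∈ Eg k,
          ENNReal.ofReal (f x) * ENNReal.ofReal (R x y) * ENNReal.ofReal (g y) := hdec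
    _ ≤ ∑' j:ℤ, ∑' k:ℤ, (U j k + V j k) := by
        apply ENNReal.tsum_le_tsum
        intro j
        apply ENNReal.tsum_le_tsum
        intro k
        exact le_trans (hS j k) (hUV j k)
    _ = (∑' j:ℤ, ∑' k:ℤ, U j k) + (∑' j:ℤ, ∑' k:ℤ, V j k) := by
        rw [← ENNReal.tsum_add]
        apply tsum_congr
        intro j
        rw [ENNReal.tsum_add]
    _ ≤ (c2 * eP 2 * G) + (c2 * eP 2 * G) := add_le_add hT1 hT2
    _ = 2 * (c2 * eP 2 * G) := (two_mul _).symm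

theorem stmt_14 (N : ℕ) (α : ℝ) (hα0 : 0 < α) (hαN : α < N)
    (C' : ℝ) (hC' : 0 ≤ C') (R : (Fin N → ℤ) → (Fin N → ℤ) → ℝ)
    (hR : ∀ x y, 0 ≤ R x y ∧
      R x y ≤ C' * ((1 + (latticeDist N x y : ℝ)) ^ (-(N - α)))) :
    ∃ C > 0, ∀ u v : (Fin N → ℤ) → ℝ,
      Summable (fun x => |u x| ^ (2 * N / (N + α))) →
      Summable (fun x => |v x| ^ (2 * N / (N + α))) →
      (∑' x, ∑' y, |u x| * R x y * |v y|) ≤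
        C * (∑' x, |u x| ^ (2 * N / (N + α))) ^ ((N + α) / (2 * N)) *
          (∑' x, |v x| ^ (2 * N / (N + α))) ^ ((N + α) / (2 * N)) := by
  classical
  have hNR : (0:ℝ) < N := lt_trans hα0 hαN
  have hβ0 : (0:ℝ) < (N:ℝ) - α := by linarith
  have hβN : (N:ℝ) - α < N := by linarith
  obtain ⟨C₁, hC₁, hker⟩ := kernel_sum N ((N:ℝ) - α) hβ0 hβN
  obtain ⟨CC, hCCtop, hcore⟩ := core N α hα0 hαN C' hC' R hR C₁ hC₁ hker
  set er : ℝ := ((N:ℝ) + α) / (2*N) with her_def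
  set rr : ℝ := 2*(N:ℝ)/((N:ℝ)+α) with hrr_def
  have hNα : (0:ℝ) < (N:ℝ) + α := by linarith
  have hrr0 : 0 < rr := by rw [hrr_def]; positivity
  have her0 : 0 < er := by rw [her_def]; positivity
  have herr : er * rr = 1 := by
    rw [her_def, hrr_def]
    field_simp
  refine ⟨CC.toReal + 1, by positivity, ?_⟩
  intro u v hu hv
  set A : ℝ := ∑' x, |u x| ^ rr with hA_def
  set B : ℝ := ∑' x, |v x| ^ rr with hB_def
  have hA0 : 0 ≤ A := tsum_nonneg (fun x => Real.rpow_nonneg (abs_nonneg _) _)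
  have hB0 : 0 ≤ B := tsum_nonneg (fun x => Real.rpow_nonneg (abs_nonneg _) _)
  have hRHS0 : 0 ≤ (CC.toReal + 1) * A ^ er * B ^ er := by
    have := Real.rpow_nonneg hA0 er
    have := Real.rpow_nonneg hB0 er
    have := ENNReal.toReal_nonneg (a := CC)
    positivity
  -- degenerate cases
  rcases eq_or_lt_of_le hA0 with hAz | hApos
  · have hux : ∀ x, u x = 0 := by
      intro x
      have h1 : |u x| ^ rr ≤ A := Summable.le_tsum hu x (fun j _ => Real.rpow_nonneg (abs_nonneg _) _)
      have h2 : 0 ≤ |u x| ^ rr := Real.rpow_nonneg (abs_nonneg _) _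
      have h3 : |u x| ^ rr = 0 := le_antisymm (by rw [← hAz] at h1; exact h1) h2
      have h4 : |u x| = 0 := by
        by_contra h
        have : 0 < |u x| := lt_of_le_of_ne (abs_nonneg _) (Ne.symm h)
        exact absurd h3 (ne_of_gt (Real.rpow_pos_of_pos this rr))
      exact abs_eq_zero.mp h4
    have hLHS : (∑' x, ∑' y, |u x| * R x y * |v y|) = 0 := by
      simp [hux]
    rw [hLHS]
    exact hRHS0
  rcases eq_or_lt_of_le hB0 with hBz | hBpos
  · have hvx : ∀ x, v x = 0 := by
      intro x
      have h1 : |v x| ^ rr ≤ B := Summable.le_tsum hv x (fun j _ => Real.rpow_nonneg (abs_nonneg _) _)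
      have h2 : 0 ≤ |v x| ^ rr := Real.rpow_nonneg (abs_nonneg _) _
      have h3 : |v x| ^ rr = 0 := le_antisymm (by rw [← hBz] at h1; exact h1) h2
      have h4 : |v x| = 0 := by
        by_contra h
        have : 0 < |v x| := lt_of_le_of_ne (abs_nonneg _) (Ne.symm h)
        exact absurd h3 (ne_of_gt (Real.rpow_pos_of_pos this rr))
      exact abs_eq_zero.mp h4
    have hLHS : (∑' x, ∑' y, |u x| * R x y * |v y|) = 0 := by
      simp [hvx]
    rw [hLHS]
    exact hRHS0
  -- main case : rescale
  set lam : ℝ := A ^ er with hlam_def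
  set mu : ℝ := B ^ er with hmu_def
  have hlam0 : 0 < lam := Real.rpow_pos_of_pos hApos er
  have hmu0 : 0 < mu := Real.rpow_pos_of_pos hBpos er
  have hlamr : lam ^ rr = A := by
    rw [hlam_def, ← Real.rpow_mul hA0, herr, Real.rpow_one]
  have hmur : mu ^ rr = B := by
    rw [hmu_def, ← Real.rpow_mul hB0, herr, Real.rpow_one]
  set u' : (Fin N → ℤ) → ℝ := fun x => u x / lam with hu'_def
  set v' : (Fin N → ℤ) → ℝ := fun x => v x / mu with hv'_def
  have hu'abs : ∀ x, |u' x| = |u x| / lam := by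
    intro x
    rw [hu'_def]
    simp only
    rw [abs_div, abs_of_pos hlam0]
  have hv'abs : ∀ x, |v' x| = |v x| / mu := by
    intro x
    rw [hv'_def]
    simp only
    rw [abs_div, abs_of_pos hmu0]
  have hu'r : ∀ x, |u' x| ^ rr = |u x| ^ rr / A := by
    intro x
    rw [hu'abs, Real.div_rpow (abs_nonneg _) hlam0.le, hlamr]
  have hv'r : ∀ x, |v' x| ^ rr = |v x| ^ rr / B := by
    intro x
    rw [hv'abs, Real.div_rpow (abs_nonneg _) hmu0.le, hmur]
  have hu's : Summable (fun x => |u' x| ^ rr) := by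
    simp only [hu'r]
    exact hu.div_const A
  have hv's : Summable (fun x => |v' x| ^ rr) := by
    simp only [hv'r]
    exact hv.div_const B
  have hu'sum : (∑' x, |u' x| ^ rr) ≤ 1 := by
    simp only [hu'r]
    rw [tsum_div_const, ← hA_def, div_self (ne_of_gt hApos)]
  have hv'sum : (∑' x, |v' x| ^ rr) ≤ 1 := by
    simp only [hv'r]
    rw [tsum_div_const, ← hB_def, div_self (ne_of_gt hBpos)]
  have hIe' := hcore u' v' hu's hv's hu'sum hv'sum
  set L : ℝ≥0∞ := ENNReal.ofReal lam with hL_def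
  set M : ℝ≥0∞ := ENNReal.ofReal mu with hM_def
  have hL0 : L ≠ 0 := by
    rw [hL_def]
    simp only [ne_eq, ENNReal.ofReal_eq_zero, not_le]
    exact hlam0
  have hM0 : M ≠ 0 := by
    rw [hM_def]
    simp only [ne_eq, ENNReal.ofReal_eq_zero, not_le]
    exact hmu0
  have hLt : L ≠ ⊤ := ENNReal.ofReal_ne_top
  have hMt : M ≠ ⊤ := ENNReal.ofReal_ne_top
  have hscale : ∀ x y, ENNReal.ofReal (|u x|) * ENNReal.ofReal (R x y) * ENNReal.ofReal (|v y|)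
      = (ENNReal.ofReal (|u' x|) * ENNReal.ofReal (R x y) * ENNReal.ofReal (|v' y|)) * (L * M) := by
    intro x y
    rw [hu'abs, hv'abs, ENNReal.ofReal_div_of_pos hlam0, ENNReal.ofReal_div_of_pos hmu0,
      ← hL_def, ← hM_def, div_eq_mul_inv, div_eq_mul_inv]
    have h1 : ENNReal.ofReal |u x| * L⁻¹ * ENNReal.ofReal (R x y) *
          (ENNReal.ofReal |v y| * M⁻¹) * (L * M)
        = (ENNReal.ofReal |u x| * ENNReal.ofReal (R x y) * ENNReal.ofReal |v y|) *
          ((L⁻¹ * L) * (M⁻¹ * M)) := by ring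
    rw [h1, ENNReal.inv_mul_cancel hL0 hLt, ENNReal.inv_mul_cancel hM0 hMt, mul_one, mul_one]
  have hId : (∑' x, ∑' y, ENNReal.ofReal (|u x|) * ENNReal.ofReal (R x y) * ENNReal.ofReal (|v y|))
      = (∑' x, ∑' y, ENNReal.ofReal (|u' x|) * ENNReal.ofReal (R x y) * ENNReal.ofReal (|v' y|))
        * (L * M) := by
    rw [← ENNReal.tsum_mul_right]
    apply tsum_congr
    intro x
    rw [← ENNReal.tsum_mul_right]
    apply tsum_congr
    intro y
    exact hscale x y
  have hIle : (∑' x, ∑' y, ENNReal.ofReal (|u x|) * ENNReal.ofReal (R x y) * ENNReal.ofReal (|v y|))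
      ≤ CC * (L * M) := by
    rw [hId]
    exact mul_le_mul' hIe' le_rfl
  have hfin : CC * (L * M) ≠ ⊤ := ENNReal.mul_ne_top hCCtop (ENNReal.mul_ne_top hLt hMt)
  have hItop : (∑' x, ∑' y, ENNReal.ofReal (|u x|) * ENNReal.ofReal (R x y)
      * ENNReal.ofReal (|v y|)) ≠ ⊤ := ne_top_of_le_ne_top hfin hIle
  -- pass to real sums
  have hinner : ∀ x, (∑' y, |u x| * R x y * |v y|)
      = (∑' y, ENNReal.ofReal (|u x|) * ENNReal.ofReal (R x y) * ENNReal.ofReal (|v y|)).toReal := by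
    intro x
    rw [ENNReal.tsum_toReal_eq (fun y =>
      ENNReal.mul_ne_top (ENNReal.mul_ne_top ENNReal.ofReal_ne_top ENNReal.ofReal_ne_top)
        ENNReal.ofReal_ne_top)]
    apply tsum_congr
    intro y
    rw [ENNReal.toReal_mul, ENNReal.toReal_mul, ENNReal.toReal_ofReal (abs_nonneg _),
      ENNReal.toReal_ofReal (hR x y).1, ENNReal.toReal_ofReal (abs_nonneg _)]
  have houter : (∑' x, ∑' y, |u x| * R x y * |v y|)
      = (∑' x, ∑' y, ENNReal.ofReal (|u x|) * ENNReal.ofReal (R x y)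
          * ENNReal.ofReal (|v y|)).toReal := by
    rw [ENNReal.tsum_toReal_eq (fun x => ne_top_of_le_ne_top hItop (ENNReal.le_tsum x))]
    exact tsum_congr hinner
  rw [houter]
  have h1 : (∑' x, ∑' y, ENNReal.ofReal (|u x|) * ENNReal.ofReal (R x y)
      * ENNReal.ofReal (|v y|)).toReal ≤ (CC * (L * M)).toReal := ENNReal.toReal_mono hfin hIle
  have h2 : (CC * (L * M)).toReal = CC.toReal * (lam * mu) := by
    rw [ENNReal.toReal_mul, ENNReal.toReal_mul, hL_def, hM_def,
      ENNReal.toReal_ofReal hlam0.le, ENNReal.toReal_ofReal hmu0.le]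
  rw [h2] at h1
  have hCt0 : 0 ≤ CC.toReal := ENNReal.toReal_nonneg
  calc (∑' x, ∑' y, ENNReal.ofReal (|u x|) * ENNReal.ofReal (R x y)
      * ENNReal.ofReal (|v y|)).toReal ≤ CC.toReal * (lam * mu) := h1
    _ ≤ (CC.toReal + 1) * lam * mu := by nlinarith [hlam0.le, hmu0.le, mul_nonneg hlam0.le hmu0.le]
    _ = (CC.toReal + 1) * A ^ er * B ^ er := by rw [hlam_def, hmu_def]
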